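/- If Σ₁ is a balanced signed graph and Σ₂ is a signed complete graph on n vertices, then bdim(Σ₁*Σ₂) = bdim(Σ₂), where * is the BCD-lexicographic product. -/

import Mathlib

open Finset
open scoped Classical

/-- A signed graph: a simple graph together with a ±1 sign on each edge. -/
structure SGraph (V : Type*) where
  G : SimpleGraph V
  sign : V → V → ℤ
  sign_symm : ∀ u v, sign u v = sign v u
  sign_mem : ∀ u v, G.Adj u v → sign u v = 1 ∨ sign u v = -1

variable {V V1 V2 W : Type*}

/-- `ζ` is a positive k-switching function for the signed graph `S`. -/
def IsPosSwitching [Fintype V] (S : SGraph V) (k : ℕ) (ζ : V → Fin k → ℤ) : Prop :=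
  (∀ v i, ζ v i = -1 ∨ ζ v i = 0 ∨ ζ v i = 1) ∧
  (∀ u v, S.G.Adj u v → (∑ i, ζ u i * ζ v i) ≠ 0) ∧
  (∀ u v, S.G.Adj u v → S.sign u v * Int.sign (∑ i, ζ u i * ζ v i) = 1)

def HasPosSwitching [Fintype V] (S : SGraph V) (k : ℕ) : Prop :=
  ∃ ζ : V → Fin k → ℤ, IsPosSwitching S k ζ

/-- The balancing dimension: least `k ≥ 1` admitting a positive k-switching function. -/
noncomputable def bdim [Fintype V] (S : SGraph V) : ℕ :=
  sInf {k | 1 ≤ k ∧ HasPosSwitching S k}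

/-- A signed graph is balanced iff it can be switched to all-positive by a 1-switching. -/
def SGraph.Balanced [Fintype V] (S : SGraph V) : Prop := HasPosSwitching S 1

/-- The negation of a signed graph. -/
def SGraph.neg (S : SGraph V) : SGraph V where
  G := S.G
  sign := fun u v => - S.sign u v
  sign_symm := fun u v => by (try dsimp only); rw [S.sign_symm]
  sign_mem := fun u v h => by rcases S.sign_mem u v h with h1 | h1 <;> simp [h1]

def SGraph.Antibalanced [Fintype V] (S : SGraph V) : Prop := S.neg.Balanced

/-- Switching equivalence of signed graphs. -/
def SwitchEquiv (S1 S2 : SGraph V) : Prop :=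
  S1.G = S2.G ∧ ∃ η : V → ℤ, (∀ v, η v = 1 ∨ η v = -1) ∧
    ∀ u v, S1.G.Adj u v → S2.sign u v = η u * S1.sign u v * η v

/-- The Cartesian product of signed graphs. -/
noncomputable def cartProd (S1 : SGraph V1) (S2 : SGraph V2) : SGraph (V1 × V2) where
  G := S1.G □ S2.G
  sign := fun p q => if p.2 = q.2 then S1.sign p.1 q.1 else S2.sign p.2 q.2
  sign_symm := by
    intro u v
    try dsimp only
    rcases eq_or_ne u.2 v.2 with h | h
    · rw [if_pos h, if_pos h.symm, S1.sign_symm]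
    · rw [if_neg h, if_neg (Ne.symm h), S2.sign_symm]
  sign_mem := by
    intro u v h
    try dsimp only
    rcases (SimpleGraph.boxProd_adj.mp h) with ⟨h1, h2⟩ | ⟨h1, h2⟩
    · rw [if_pos h2]; exact S1.sign_mem _ _ h1
    · rw [if_neg h1.ne]; exact S2.sign_mem _ _ h1
/-- The HG-lexicographic product of signed graphs. -/
noncomputable def lexHG (S1 : SGraph V1) (S2 : SGraph V2) : SGraph (V1 × V2) where
  G := { Adj := fun p q => S1.G.Adj p.1 q.1 ∨ (p.1 = q.1 ∧ S2.G.Adj p.2 q.2)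
         symm := by
           constructor
           rintro p q (h | ⟨h1, h2⟩)
           · exact Or.inl h.symm
           · exact Or.inr ⟨h1.symm, h2.symm⟩
         loopless := by
           constructor
           rintro p (h | ⟨_, h⟩)
           · exact S1.G.irrefl h
           · exact S2.G.irrefl h }
  sign := fun p q => if p.1 = q.1 then S2.sign p.2 q.2 else S1.sign p.1 q.1
  sign_symm := by
    intro u v
    try dsimp only
    rcases eq_or_ne u.1 v.1 with h | h
    · rw [if_pos h, if_pos h.symm, S2.sign_symm]
    · rw [if_neg h, if_neg (Ne.symm h), S1.sign_symm]
  sign_mem := by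
    rintro p q (h | ⟨h1, h2⟩)
    · (try dsimp only); rw [if_neg h.ne]; exact S1.sign_mem _ _ h
    · (try dsimp only); rw [if_pos h1]; exact S2.sign_mem _ _ h2

/-- The BCD-lexicographic product of signed graphs. -/
noncomputable def lexBCD (S1 : SGraph V1) (S2 : SGraph V2) : SGraph (V1 × V2) where
  G := { Adj := fun p q => S1.G.Adj p.1 q.1 ∨ (p.1 = q.1 ∧ S2.G.Adj p.2 q.2)
         symm := by
           constructor
           rintro p q (h | ⟨h1, h2⟩)
           · exact Or.inl h.symm
           · exact Or.inr ⟨h1.symm, h2.symm⟩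
         loopless := by
           constructor
           rintro p (h | ⟨_, h⟩)
           · exact S1.G.irrefl h
           · exact S2.G.irrefl h }
  sign := fun p q =>
    if S2.G.Adj p.2 q.2 then
      (if S1.G.Adj p.1 q.1 then S1.sign p.1 q.1 * S2.sign p.2 q.2 else S2.sign p.2 q.2)
    else S1.sign p.1 q.1
  sign_symm := by
    intro u v
    try dsimp only
    rw [S1.G.adj_comm v.1 u.1, S2.G.adj_comm v.2 u.2, S1.sign_symm v.1 u.1,
      S2.sign_symm v.2 u.2]
  sign_mem := by
    rintro p q (h | ⟨h1, h2⟩) <;> try dsimp only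
    · by_cases h2 : S2.G.Adj p.2 q.2
      · rw [if_pos h2, if_pos h]
        rcases S1.sign_mem _ _ h with e1 | e1 <;> rcases S2.sign_mem _ _ h2 with e2 | e2 <;>
          simp [e1, e2]
      · rw [if_neg h2]; exact S1.sign_mem _ _ h
    · rw [if_pos h2, if_neg (h1 ▸ S1.G.irrefl)]
      exact S2.sign_mem _ _ h2

/-- The tensor product of signed graphs. -/
def tensorProd (S1 : SGraph V1) (S2 : SGraph V2) : SGraph (V1 × V2) where
  G := { Adj := fun p q => S1.G.Adj p.1 q.1 ∧ S2.G.Adj p.2 q.2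
         symm := ⟨fun p q ⟨h1, h2⟩ => ⟨h1.symm, h2.symm⟩⟩
         loopless := ⟨fun p ⟨h1, _⟩ => S1.G.irrefl h1⟩ }
  sign := fun p q => S1.sign p.1 q.1 * S2.sign p.2 q.2
  sign_symm := by
    intro u v
    try dsimp only
    rw [S1.sign_symm, S2.sign_symm]
  sign_mem := by
    rintro p q ⟨h1, h2⟩
    try dsimp only
    rcases S1.sign_mem _ _ h1 with e1 | e1 <;> rcases S2.sign_mem _ _ h2 with e2 | e2 <;>
      simp [e1, e2]

/-- The strong product of signed graphs. -/
noncomputable def strongProd (S1 : SGraph V1) (S2 : SGraph V2) : SGraph (V1 × V2) where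
  G := { Adj := fun p q => (S1.G.Adj p.1 q.1 ∧ p.2 = q.2) ∨ (p.1 = q.1 ∧ S2.G.Adj p.2 q.2) ∨
           (S1.G.Adj p.1 q.1 ∧ S2.G.Adj p.2 q.2)
         symm := by
           constructor
           rintro p q (⟨h1, h2⟩ | ⟨h1, h2⟩ | ⟨h1, h2⟩)
           · exact Or.inl ⟨h1.symm, h2.symm⟩
           · exact Or.inr (Or.inl ⟨h1.symm, h2.symm⟩)
           · exact Or.inr (Or.inr ⟨h1.symm, h2.symm⟩)
         loopless := by
           constructor
           rintro p (⟨h1, _⟩ | ⟨_, h2⟩ | ⟨h1, _⟩)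
           · exact S1.G.irrefl h1
           · exact S2.G.irrefl h2
           · exact S1.G.irrefl h1 }
  sign := fun p q =>
    if p.1 = q.1 then S2.sign p.2 q.2
    else if p.2 = q.2 then S1.sign p.1 q.1
    else S1.sign p.1 q.1 * S2.sign p.2 q.2
  sign_symm := by
    intro u v
    try dsimp only
    rcases eq_or_ne u.1 v.1 with h | h
    · rw [if_pos h, if_pos h.symm, S2.sign_symm]
    · rw [if_neg h, if_neg (Ne.symm h)]
      rcases eq_or_ne u.2 v.2 with h' | h'
      · rw [if_pos h', if_pos h'.symm, S1.sign_symm]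
      · rw [if_neg h', if_neg (Ne.symm h'), S1.sign_symm, S2.sign_symm]
  sign_mem := by
    rintro p q (⟨h1, h2⟩ | ⟨h1, h2⟩ | ⟨h1, h2⟩) <;> try dsimp only
    · rw [if_neg h1.ne, if_pos h2]; exact S1.sign_mem _ _ h1
    · rw [if_pos h1]; exact S2.sign_mem _ _ h2
    · rw [if_neg h1.ne, if_neg h2.ne]
      rcases S1.sign_mem _ _ h1 with e1 | e1 <;> rcases S2.sign_mem _ _ h2 with e2 | e2 <;>
        simp [e1, e2]
/-- The cycle on `ZMod n` (vertices `0,1,…,n-1`) with the single negative edge `{0,1}`. -/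
noncomputable def Cneg (n : ℕ) : SGraph (ZMod n) where
  G := { Adj := fun i j => i ≠ j ∧ (i - j = 1 ∨ j - i = 1)
         symm := ⟨fun i j ⟨h1, h2⟩ => ⟨h1.symm, h2.symm⟩⟩
         loopless := ⟨fun i ⟨h1, _⟩ => h1 rfl⟩ }
  sign := fun i j => if (i = 0 ∧ j = 1) ∨ (i = 1 ∧ j = 0) then -1 else 1
  sign_symm := by
    intro u v
    try dsimp only
    exact if_congr (by tauto) rfl rfl
  sign_mem := by
    intro u v _
    try dsimp only
    by_cases h : (u = 0 ∧ v = 1) ∨ (u = 1 ∧ v = 0)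
    · rw [if_pos h]; exact Or.inr rfl
    · rw [if_neg h]; exact Or.inl rfl

/-- The all-negative complete signed graph on `n` vertices. -/
def Kneg (n : ℕ) : SGraph (Fin n) where
  G := ⊤
  sign := fun _ _ => -1
  sign_symm := fun _ _ => rfl
  sign_mem := fun _ _ _ => Or.inr rfl

/-- The edgeless signed graph on `k` vertices. -/
def Nk (k : ℕ) : SGraph (Fin k) where
  G := ⊥
  sign := fun _ _ => 1
  sign_symm := fun _ _ => rfl
  sign_mem := fun _ _ h => (h.elim)

/-- The lexicographic product of simple graphs. -/
def lexProdGraph (G : SimpleGraph V1) (H : SimpleGraph V2) : SimpleGraph (V1 × V2) where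
  Adj p q := G.Adj p.1 q.1 ∨ (p.1 = q.1 ∧ H.Adj p.2 q.2)
  symm := by
    constructor
    rintro p q (h | ⟨h1, h2⟩)
    · exact Or.inl h.symm
    · exact Or.inr ⟨h1.symm, h2.symm⟩
  loopless := by
    constructor
    rintro p (h | ⟨_, h⟩)
    · exact G.irrefl h
    · exact H.irrefl h

/-!
Write `σ₁(u u') = e u e u'` with `e : V₁ → ℤˣ` and give `(u, v)` the vector `e u • ζ₂ v`. On an
edge `(u, v)(u', v')` with `v ≠ v'` both the sign and the inner product pick up the factor
`e u e u'` relative to `Σ₂`, while for `v = v'` the inner product is `e u e u' ‖ζ₂ v‖²`, of sign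
`σ₁(u u')`; this needs `ζ₂ v ≠ 0`, which can be arranged at isolated vertices. Conversely each
fibre `{u} × V₂` is a copy of `Σ₂`.
-/

open Matrix

lemma Int.sign_units (u : ℤˣ) : Int.sign u = u := by
  rcases Int.units_eq_one_or u with rfl | rfl <;> rfl

lemma Int.sign_dotProduct_self {k : ℕ} {x : Fin k → ℤ} (hx : x ≠ 0) : Int.sign (x ⬝ᵥ x) = 1 :=
  Int.sign_eq_one_of_pos <| by simpa using dotProduct_self_star_pos_iff.mpr hx

section Switching

variable [Fintype V] {S : SGraph V} {k : ℕ} {ζ : V → Fin k → ℤ}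

/-- Since signs are `±1`, the two edge conditions of a positive switching merge into one. -/
lemma isPosSwitching_iff :
    IsPosSwitching S k ζ ↔ (∀ v i, ζ v i = -1 ∨ ζ v i = 0 ∨ ζ v i = 1) ∧
      ∀ u v, S.G.Adj u v → Int.sign (ζ u ⬝ᵥ ζ v) = S.sign u v := by
  refine ⟨fun ⟨hval, _, hsign⟩ => ⟨hval, fun u v huv => ?_⟩,
    fun ⟨hval, hsign⟩ => ⟨hval, fun u v huv => ?_, fun u v huv => ?_⟩⟩
  · rcases Int.eq_one_or_neg_one_of_mul_eq_one' (hsign u v huv) with ⟨h, h'⟩ | ⟨h, h'⟩ <;>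
      exact h'.trans h.symm
  · change ζ u ⬝ᵥ ζ v ≠ 0
    rw [Ne, ← Int.sign_eq_zero_iff_zero]
    rcases S.sign_mem u v huv with h | h <;> simp [hsign u v huv, h]
  · change S.sign u v * Int.sign (ζ u ⬝ᵥ ζ v) = 1
    rcases S.sign_mem u v huv with h | h <;> simp [hsign u v huv, h]

lemma IsPosSwitching.ne_zero_of_adj (hζ : IsPosSwitching S k ζ) {u v : V} (huv : S.G.Adj u v) :
    ζ u ≠ 0 := by
  rintro hu
  have := hζ.2.1 u v huv
  simp_all

lemma IsPosSwitching.comp [Fintype W] {T : SGraph W} (f : W → V)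
    (hadj : ∀ a b, T.G.Adj a b → S.G.Adj (f a) (f b))
    (hsign : ∀ a b, T.G.Adj a b → T.sign a b = S.sign (f a) (f b))
    (hζ : IsPosSwitching S k ζ) : IsPosSwitching T k (ζ ∘ f) := by
  obtain ⟨hval, hζsign⟩ := isPosSwitching_iff.mp hζ
  refine isPosSwitching_iff.mpr ⟨fun a => hval (f a), fun a b hab => ?_⟩
  rw [hsign a b hab]
  exact hζsign _ _ (hadj a b hab)

/-- Vertices carrying the zero vector are isolated, so they may be sent to a basis vector. -/
lemma HasPosSwitching.exists_forall_ne_zero (h : HasPosSwitching S k) (hk : 1 ≤ k) :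
    ∃ ζ : V → Fin k → ℤ, IsPosSwitching S k ζ ∧ ∀ v, ζ v ≠ 0 := by
  obtain ⟨ζ, hζ⟩ := h
  obtain ⟨hval, hsign⟩ := isPosSwitching_iff.mp hζ
  set e : Fin k → ℤ := Pi.single ⟨0, hk⟩ 1
  refine ⟨fun v => if ζ v = 0 then e else ζ v, isPosSwitching_iff.mpr ⟨?_, ?_⟩, ?_⟩
  · intro v i
    split_ifs
    · by_cases hi : i = ⟨0, hk⟩ <;> simp [e, hi]
    · exact hval v i
  · intro u v huv
    simp only [if_neg (hζ.ne_zero_of_adj huv), if_neg (hζ.ne_zero_of_adj huv.symm)]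
    exact hsign u v huv
  · intro v
    dsimp only
    split_ifs with hv
    · simp [e]
    · exact hv

lemma SGraph.Balanced.exists_units (h : S.Balanced) :
    ∃ e : V → ℤˣ, ∀ u v, S.G.Adj u v → S.sign u v = e u * e v := by
  obtain ⟨ζ, hζ, hne⟩ := HasPosSwitching.exists_forall_ne_zero h le_rfl
  obtain ⟨hval, hsign⟩ := isPosSwitching_iff.mp hζ
  have hunit : ∀ u, IsUnit (ζ u 0) := by
    intro u
    have hu : ζ u 0 ≠ 0 := fun h0 => hne u (funext fun i => by rwa [Fin.fin_one_eq_zero i])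
    rcases hval u 0 with h | h | h
    exacts [Int.isUnit_iff.mpr (Or.inr h), absurd h hu, Int.isUnit_iff.mpr (Or.inl h)]
  refine ⟨fun u => (hunit u).unit, fun u v huv => ?_⟩
  have hdot : ζ u ⬝ᵥ ζ v = ((hunit u).unit * (hunit v).unit : ℤˣ) := by
    simp [dotProduct]
  rw [← hsign u v huv, hdot, Int.sign_units, Units.val_mul]

end Switching

section LexBCD

variable {S1 : SGraph V1} {S2 : SGraph V2} {p q : V1 × V2}

lemma lexBCD_adj :
    (lexBCD S1 S2).G.Adj p q ↔ S1.G.Adj p.1 q.1 ∨ (p.1 = q.1 ∧ S2.G.Adj p.2 q.2) :=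
  Iff.rfl

lemma lexBCD_sign_of_adj_of_adj (h1 : S1.G.Adj p.1 q.1) (h2 : S2.G.Adj p.2 q.2) :
    (lexBCD S1 S2).sign p q = S1.sign p.1 q.1 * S2.sign p.2 q.2 := by
  simp [lexBCD, h1, h2]

lemma lexBCD_sign_of_not_adj (h2 : ¬S2.G.Adj p.2 q.2) :
    (lexBCD S1 S2).sign p q = S1.sign p.1 q.1 := by
  simp [lexBCD, h2]

lemma lexBCD_sign_of_fst_eq (h1 : p.1 = q.1) (h2 : S2.G.Adj p.2 q.2) :
    (lexBCD S1 S2).sign p q = S2.sign p.2 q.2 := by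
  simp [lexBCD, h1, h2]

variable [Fintype V1] [Fintype V2] {k : ℕ}

lemma IsPosSwitching.fiber {ζ : V1 × V2 → Fin k → ℤ} (hζ : IsPosSwitching (lexBCD S1 S2) k ζ)
    (u : V1) : IsPosSwitching S2 k (fun v => ζ (u, v)) :=
  hζ.comp (Prod.mk u) (fun _ _ h => Or.inr ⟨rfl, h⟩)
    (fun a b h => (lexBCD_sign_of_fst_eq (p := (u, a)) (q := (u, b)) rfl h).symm)

lemma IsPosSwitching.lexBCD_of_complete {e : V1 → ℤˣ}
    (he : ∀ u v, S1.G.Adj u v → S1.sign u v = e u * e v) (h2 : S2.G = ⊤)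
    {ζ : V2 → Fin k → ℤ} (hζ : IsPosSwitching S2 k ζ) (hne : ∀ v, ζ v ≠ 0) :
    IsPosSwitching (lexBCD S1 S2) k (fun p => (e p.1 : ℤ) • ζ p.2) := by
  obtain ⟨hval, hsign⟩ := isPosSwitching_iff.mp hζ
  refine isPosSwitching_iff.mpr ⟨fun p i => ?_, fun p q hpq => ?_⟩
  · rcases Int.units_eq_one_or (e p.1) with h | h <;>
      rcases hval p.2 i with h' | h' | h' <;> simp [h, h']
  have hdot : Int.sign ((e p.1 : ℤ) • ζ p.2 ⬝ᵥ (e q.1 : ℤ) • ζ q.2) =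
      (e p.1 * e q.1 : ℤˣ) * Int.sign (ζ p.2 ⬝ᵥ ζ q.2) := by
    rw [smul_dotProduct, dotProduct_smul, smul_eq_mul, smul_eq_mul, ← mul_assoc, Int.sign_mul,
      ← Units.val_mul, Int.sign_units]
  rw [hdot]
  rcases lexBCD_adj.mp hpq with h1 | ⟨h1, h2'⟩
  · by_cases hv : p.2 = q.2
    · have hnadj : ¬S2.G.Adj p.2 q.2 := hv ▸ S2.G.irrefl
      rw [lexBCD_sign_of_not_adj hnadj, he _ _ h1, hv, Int.sign_dotProduct_self (hne q.2)]
      simp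
    · have hadj : S2.G.Adj p.2 q.2 := by rw [h2]; exact hv
      rw [lexBCD_sign_of_adj_of_adj h1 hadj, he _ _ h1, hsign _ _ hadj, Units.val_mul]
  · rw [lexBCD_sign_of_fst_eq h1 h2', h1, Int.units_mul_self, Units.val_one, one_mul]
    exact hsign _ _ h2'

lemma hasPosSwitching_lexBCD_iff [Nonempty V1] {e : V1 → ℤˣ}
    (he : ∀ u v, S1.G.Adj u v → S1.sign u v = e u * e v) (h2 : S2.G = ⊤) (hk : 1 ≤ k) :
    HasPosSwitching (lexBCD S1 S2) k ↔ HasPosSwitching S2 k := by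
  refine ⟨fun ⟨ζ, hζ⟩ => ⟨_, hζ.fiber (Classical.arbitrary V1)⟩, fun h => ?_⟩
  obtain ⟨ζ, hζ, hne⟩ := h.exists_forall_ne_zero hk
  exact ⟨_, hζ.lexBCD_of_complete he h2 hne⟩

end LexBCD

theorem stmt16 [Fintype V1] [Fintype V2] [Nonempty V1] (S1 : SGraph V1) (S2 : SGraph V2)
    (h1 : S1.Balanced) (h2 : S2.G = ⊤) :
    bdim (lexBCD S1 S2) = bdim S2 := by
  obtain ⟨e, he⟩ := h1.exists_units
  unfold bdim
  congr 1
  ext k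
  exact and_congr_right fun hk => hasPosSwitching_lexBCD_iff he h2 hk
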